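/- arXiv:2107.10896 — 2 statements merged into one kernel-verified Lean document; each statement's English description precedes it below -/
import Mathlib

section
/- Let m ≥ 3 be an integer, set 2* := 2m/(m-2), and let λ ≤ -1. Then there exist no real numbers c₁ > 0, c₂ > 0 satisfying c₁ = c₁^(2*-1) + λ c₂^(2*/2) c₁^(2*/2 - 1) and c₂ = c₂^(2*-1) + λ c₁^(2*/2) c₂^(2*/2 - 1) (all powers being real powers of positive reals). -/
/-- For an integer `m ≥ 3`, `2* := 2m/(m-2)` and `λ ≤ -1`, there are no
`c₁, c₂ > 0` solving the algebraic system (ss1) with `ℓ = 2`. -/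
theorem stmt2 (m : ℕ) (hm : 3 ≤ m) (p : ℝ) (hp : p = 2 * (m : ℝ) / ((m : ℝ) - 2))
    (l : ℝ) (hl : l ≤ -1) :
    ¬ ∃ c₁ c₂ : ℝ, 0 < c₁ ∧ 0 < c₂ ∧
      c₁ = c₁ ^ (p - 1) + l * c₂ ^ (p / 2) * c₁ ^ (p / 2 - 1) ∧
      c₂ = c₂ ^ (p - 1) + l * c₁ ^ (p / 2) * c₂ ^ (p / 2 - 1) := by
  rintro ⟨c₁, c₂, h1, h2, e1, e2⟩
  have ha : (0:ℝ) < c₁ ^ (p / 2) := Real.rpow_pos_of_pos h1 _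
  have hb : (0:ℝ) < c₂ ^ (p / 2) := Real.rpow_pos_of_pos h2 _
  have hX1 : (0:ℝ) < c₁ ^ (p / 2 - 1) := Real.rpow_pos_of_pos h1 _
  have hX2 : (0:ℝ) < c₂ ^ (p / 2 - 1) := Real.rpow_pos_of_pos h2 _
  have A1 : c₁ ^ (p / 2) * c₁ ^ (p / 2 - 1) = c₁ ^ (p - 1) := by
    rw [← Real.rpow_add h1]; ring_nf
  have A2 : c₂ ^ (p / 2) * c₂ ^ (p / 2 - 1) = c₂ ^ (p - 1) := by
    rw [← Real.rpow_add h2]; ring_nf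
  have B1 : c₁ ^ (2 - p / 2) * c₁ ^ (p / 2 - 1) = c₁ := by
    rw [← Real.rpow_add h1]
    norm_num
  have B2 : c₂ ^ (2 - p / 2) * c₂ ^ (p / 2 - 1) = c₂ := by
    rw [← Real.rpow_add h2]
    norm_num
  have k1 : c₁ ^ (2 - p / 2) = c₁ ^ (p / 2) + l * c₂ ^ (p / 2) := by
    have h : c₁ ^ (2 - p / 2) * c₁ ^ (p / 2 - 1)
        = (c₁ ^ (p / 2) + l * c₂ ^ (p / 2)) * c₁ ^ (p / 2 - 1) := by
      rw [B1]; conv_lhs => rw [e1, ← A1]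
      ring
    exact mul_right_cancel₀ (ne_of_gt hX1) h
  have k2 : c₂ ^ (2 - p / 2) = c₂ ^ (p / 2) + l * c₁ ^ (p / 2) := by
    have h : c₂ ^ (2 - p / 2) * c₂ ^ (p / 2 - 1)
        = (c₂ ^ (p / 2) + l * c₁ ^ (p / 2)) * c₂ ^ (p / 2 - 1) := by
      rw [B2]; conv_lhs => rw [e2, ← A2]
      ring
    exact mul_right_cancel₀ (ne_of_gt hX2) h
  have P1 : (0:ℝ) < c₁ ^ (2 - p / 2) := Real.rpow_pos_of_pos h1 _
  have P2 : (0:ℝ) < c₂ ^ (2 - p / 2) := Real.rpow_pos_of_pos h2 _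
  nlinarith [mul_pos ha hb]
end

section
/- Let n₁, n₂ ≥ 2 be integers, m := n₁ + n₂ - 1, and define q : 𝕊^m → ℝ on the unit sphere 𝕊^m ⊂ ℝ^{n₁} × ℝ^{n₂} by q(x, y) := arccos(‖x‖² - ‖y‖²). Then: (i) q is continuous; (ii) the image of q is exactly the interval [0, π]; and (iii) for points (x, y), (x', y') ∈ 𝕊^m one has q(x, y) = q(x', y') if and only if there exist linear isometries γ₁ of ℝ^{n₁} and γ₂ of ℝ^{n₂} with γ₁ x = x' and γ₂ y = y'. Thus q identifies each Γ-orbit in 𝕊^m to a single point of [0, π]. -/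
/-! On the sphere `‖x‖² + ‖y‖² = 1` the single number `‖x‖² - ‖y‖² ∈ [-1, 1]` determines both
norms, and two vectors of a real inner product space lie in one orbit of its isometry group
exactly when they have the same norm (a reflection in the hyperplane orthogonal to their
difference maps one to the other). Since `arccos` is a bijection from `[-1, 1]` onto `[0, π]`,
`q` separates precisely the `O(n₁) × O(n₂)`-orbits. -/

open Set

theorem exists_linearIsometryEquiv_apply_eq_iff_norm_eq {E : Type*} [NormedAddCommGroup E]
    [InnerProductSpace ℝ E] {x y : E} :
    (∃ γ : E ≃ₗᵢ[ℝ] E, γ x = y) ↔ ‖x‖ = ‖y‖ := by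
  constructor
  · rintro ⟨γ, rfl⟩
    exact (γ.norm_map x).symm
  · intro h
    exact ⟨Submodule.reflection (ℝ ∙ (x - y))ᗮ, Submodule.reflection_sub h⟩

theorem sq_sub_sq_mem_Icc_of_sq_add_sq_eq_one {a b : ℝ} (h : a ^ 2 + b ^ 2 = 1) :
    a ^ 2 - b ^ 2 ∈ Icc (-1) 1 := by
  constructor <;> nlinarith [sq_nonneg a, sq_nonneg b]

theorem sq_sub_sq_eq_sq_sub_sq_iff {a b a' b' : ℝ} (ha : 0 ≤ a) (hb : 0 ≤ b) (ha' : 0 ≤ a')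
    (hb' : 0 ≤ b') (h : a ^ 2 + b ^ 2 = 1) (h' : a' ^ 2 + b' ^ 2 = 1) :
    a ^ 2 - b ^ 2 = a' ^ 2 - b' ^ 2 ↔ a = a' ∧ b = b' := by
  constructor
  · intro hsub
    exact ⟨by nlinarith, by nlinarith⟩
  · rintro ⟨rfl, rfl⟩
    rfl

theorem image_norm_sq_sub_norm_sq_sphere (E F : Type*) [NormedAddCommGroup E] [NormedSpace ℝ E]
    [Nontrivial E] [NormedAddCommGroup F] [NormedSpace ℝ F] [Nontrivial F] :
    (fun p : E × F => ‖p.1‖ ^ 2 - ‖p.2‖ ^ 2) '' {p | ‖p.1‖ ^ 2 + ‖p.2‖ ^ 2 = 1} =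
      Icc (-1) 1 := by
  refine Subset.antisymm ?_ fun c hc => ?_
  · rintro _ ⟨p, hp, rfl⟩
    exact sq_sub_sq_mem_Icc_of_sq_add_sq_eq_one hp
  · obtain ⟨x, hx⟩ := exists_norm_eq E (Real.sqrt_nonneg ((1 + c) / 2))
    obtain ⟨y, hy⟩ := exists_norm_eq F (Real.sqrt_nonneg ((1 - c) / 2))
    have hx2 : ‖x‖ ^ 2 = (1 + c) / 2 := by rw [hx, Real.sq_sqrt (by linarith [hc.1])]
    have hy2 : ‖y‖ ^ 2 = (1 - c) / 2 := by rw [hy, Real.sq_sqrt (by linarith [hc.2])]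
    refine ⟨(x, y), ?_, ?_⟩ <;> simp only [mem_ofPred_eq, hx2, hy2] <;> ring

/-- The map `q(x, y) = arccos(‖x‖² - ‖y‖²)` on the unit sphere of
`ℝ^{n₁} × ℝ^{n₂}` is continuous, has image exactly `[0, π]`, and two points of
the sphere have the same value of `q` iff they lie in the same
`O(n₁) × O(n₂)`-orbit; thus `q` identifies each orbit to a point of `[0, π]`. -/
theorem stmt9 (n₁ n₂ : ℕ) (h1 : 2 ≤ n₁) (h2 : 2 ≤ n₂)
    (S : Set (EuclideanSpace ℝ (Fin n₁) × EuclideanSpace ℝ (Fin n₂)))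
    (hS : S = {p | ‖p.1‖ ^ 2 + ‖p.2‖ ^ 2 = 1})
    (q : EuclideanSpace ℝ (Fin n₁) × EuclideanSpace ℝ (Fin n₂) → ℝ)
    (hq : ∀ p, q p = Real.arccos (‖p.1‖ ^ 2 - ‖p.2‖ ^ 2)) :
    ContinuousOn q S ∧
    q '' S = Set.Icc 0 Real.pi ∧
    ∀ p ∈ S, ∀ p' ∈ S, (q p = q p' ↔
      ∃ γ₁ : EuclideanSpace ℝ (Fin n₁) ≃ₗᵢ[ℝ] EuclideanSpace ℝ (Fin n₁),
      ∃ γ₂ : EuclideanSpace ℝ (Fin n₂) ≃ₗᵢ[ℝ] EuclideanSpace ℝ (Fin n₂),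
        γ₁ p.1 = p'.1 ∧ γ₂ p.2 = p'.2) := by
  obtain rfl : q = fun p => Real.arccos (‖p.1‖ ^ 2 - ‖p.2‖ ^ 2) := funext hq
  subst hS
  have : Nontrivial (Fin n₁) := Fin.nontrivial_iff_two_le.mpr h1
  have : Nontrivial (Fin n₂) := Fin.nontrivial_iff_two_le.mpr h2
  refine ⟨?_, ?_, fun p hp p' hp' => ?_⟩
  · exact (Real.continuous_arccos.comp
      ((continuous_fst.norm.pow 2).sub (continuous_snd.norm.pow 2))).continuousOn
  · rw [← image_image Real.arccos, image_norm_sq_sub_norm_sq_sphere, Real.arccos_image_Icc]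
  · rw [Real.arccos_injOn.eq_iff (sq_sub_sq_mem_Icc_of_sq_add_sq_eq_one hp)
        (sq_sub_sq_mem_Icc_of_sq_add_sq_eq_one hp'),
      sq_sub_sq_eq_sq_sub_sq_iff (norm_nonneg _) (norm_nonneg _) (norm_nonneg _)
        (norm_nonneg _) hp hp',
      ← exists_linearIsometryEquiv_apply_eq_iff_norm_eq,
      ← exists_linearIsometryEquiv_apply_eq_iff_norm_eq]
    exact ⟨fun ⟨⟨γ₁, h₁⟩, ⟨γ₂, h₂⟩⟩ => ⟨γ₁, γ₂, h₁, h₂⟩,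
      fun ⟨γ₁, γ₂, h₁, h₂⟩ => ⟨⟨γ₁, h₁⟩, ⟨γ₂, h₂⟩⟩⟩
end
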